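/- For an associative product μ: KQ_2 → KQ_1 with structure coefficients λ_{p,α} (μ(p) = Σ_{α // p} λ_{p,α} α for paths p of length two), the associativity of μ is equivalent to: for every path q = α_3α_2α_1 of length three and every arrow α parallel to q, Σ_{β // α_3α_2} λ_{α_3α_2, β} λ_{βα_1, α} = Σ_{β' // α_2α_1} λ_{α_2α_1, β'} λ_{α_3β', α}. -/
import Mathlib


/- STATEMENT 12: For an associative product μ : KQ₂ → KQ₁ with structure
coefficients λ_{p,α}  (μ(p) = Σ_{α // p} λ_{p,α} α  for paths p of length two),
the associativity of μ is equivalent to: for every path q = α₃α₂α₁ of length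
three and every arrow α parallel to q,
  Σ_{β // α₃α₂} λ_{α₃α₂,β} λ_{βα₁,α} = Σ_{β' // α₂α₁} λ_{α₂α₁,β'} λ_{α₃β',α}.

A finite quiver is given by vertex/arrow types `Q₀`, `Q₁` with source and
target maps `qs`, `qt`.  The structure coefficients are a function
`lam : Q₁ → Q₁ → Q₁ → K`, where `lam β α γ = λ_{βα,γ}`, subject to the
vanishing condition that `λ_{βα,γ} = 0` unless `βα` is a composable path of
length two and `γ` is parallel to it.  With this vanishing condition the sums
over all arrows agree with the sums over parallel arrows in the paper.
Associativity of μ, i.e. μ∘(μ⊗id) = μ∘(id⊗μ) on KQ₃, is expressed on the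
basis of composable paths of length three, with values in KQ₁ = Q₁ →₀ K. -/

noncomputable section

open Finset

variable {K : Type} [CommRing K] {Q₀ Q₁ : Type} [Fintype Q₁]
  (qs qt : Q₁ → Q₀) (lam : Q₁ → Q₁ → Q₁ → K)

/-- `μ(βα) ∈ KQ₁`, the value of μ on the length-two path `βα`. -/
def mu2 (β α : Q₁) : Q₁ →₀ K := ∑ γ : Q₁, Finsupp.single γ (lam β α γ)

lemma mu2_apply {K : Type} [CommRing K] {Q₁ : Type} [Fintype Q₁]
    (lam : Q₁ → Q₁ → Q₁ → K) (β α γ : Q₁) : mu2 lam β α γ = lam β α γ := by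
  classical
  simp [mu2, Finsupp.finset_sum_apply, Finsupp.single_apply]

theorem mu_assoc_iff_structure_coeffs
    (hvanish : ∀ β α γ : Q₁, lam β α γ ≠ 0 →
        qs β = qt α ∧ qs γ = qs α ∧ qt γ = qt β) :
    -- associativity of μ : KQ₂ → KQ₁, evaluated on all length-three paths
    (∀ α₁ α₂ α₃ : Q₁, qs α₂ = qt α₁ → qs α₃ = qt α₂ →
        ∑ β : Q₁, lam α₃ α₂ β • mu2 lam β α₁
          = ∑ β' : Q₁, lam α₂ α₁ β' • mu2 lam α₃ β')
    ↔
    -- the structure-coefficient identity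
    (∀ α₁ α₂ α₃ α : Q₁, qs α₂ = qt α₁ → qs α₃ = qt α₂ →
        qs α = qs α₁ → qt α = qt α₃ →
        ∑ β : Q₁, lam α₃ α₂ β * lam β α₁ α
          = ∑ β' : Q₁, lam α₂ α₁ β' * lam α₃ β' α) := by
  classical
  constructor
  · intro h α₁ α₂ α₃ α h21 h32 hs ht
    have := congrArg (fun f => f α) (h α₁ α₂ α₃ h21 h32)
    simpa [Finsupp.finset_sum_apply, Finsupp.smul_apply, mu2_apply, smul_eq_mul]
      using this
  · intro h α₁ α₂ α₃ h21 h32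
    ext γ
    simp only [Finsupp.finset_sum_apply, Finsupp.smul_apply, mu2_apply, smul_eq_mul]
    by_cases hc : qs γ = qs α₁ ∧ qt γ = qt α₃
    · exact h α₁ α₂ α₃ γ h21 h32 hc.1 hc.2
    · rw [Finset.sum_eq_zero, Finset.sum_eq_zero]
      · intro β' _
        by_cases h1 : lam α₂ α₁ β' = 0
        · simp [h1]
        by_cases h2 : lam α₃ β' γ = 0
        · simp [h2]
        obtain ⟨_, hb1, hb2⟩ := hvanish _ _ _ h1
        obtain ⟨_, hg1, hg2⟩ := hvanish _ _ _ h2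
        exact absurd ⟨hg1.trans hb1, hg2⟩ hc
      · intro β _
        by_cases h1 : lam α₃ α₂ β = 0
        · simp [h1]
        by_cases h2 : lam β α₁ γ = 0
        · simp [h2]
        obtain ⟨_, hb1, hb2⟩ := hvanish _ _ _ h1
        obtain ⟨_, hg1, hg2⟩ := hvanish _ _ _ h2
        exact absurd ⟨hg1, hg2.trans hb2⟩ hc


end
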